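/- arXiv:2512.16338 — 4 statements merged into one kernel-verified Lean document; each statement's English description precedes it below -/
import Mathlib

section
/- Let a < c be real numbers, let A : [a,c] → ℝ^{n×n} be continuous, and let y : [a,c] → ℝⁿ be differentiable with y'(t) = A(t) y(t) for all t ∈ [a,c]. Let V ⊆ ℝⁿ be a subspace with orthogonal projections Π_V, Π_{V⊥}, and let P ∈ ℝ^{n×n} be symmetric positive semidefinite with ker(P) = V⊥. Suppose there is a constant b ∈ ℝ such that for all t ∈ [a,c]: Π_V A(t) Π_{V⊥} = 0 and P A(t) Π_V + Π_V A(t)ᵀ P ⪯ 2 b P. Then y(t)ᵀ P y(t) ≤ e^{2b(t−a)} · y(a)ᵀ P y(a) for all t ∈ [a,c]. -/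
/-! `P` only sees the `V`-component (`P Π_V = P`, from `ker P = V⊥`) and `V⊥` is `A`-invariant
(`Π_V A Π_{V⊥} = 0`), so `P A Π_V = P A`. The hypothesis `P A Π_V + Π_V Aᵀ P ⪯ 2 b P` then says
that `q = yᵀ P y`, whose derivative is `2 yᵀ P A y`, satisfies `q' ≤ 2 b q`, and the scalar
Grönwall inequality concludes. -/

open Matrix Real Set

theorem le_exp_mul_of_hasDerivAt_le_mul {f f' : ℝ → ℝ} {K a c : ℝ}
    (hf : ∀ t ∈ Icc a c, HasDerivAt f (f' t) t) (bound : ∀ t ∈ Icc a c, f' t ≤ K * f t) :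
    ∀ t ∈ Icc a c, f t ≤ exp (K * (t - a)) * f a := by
  intro t ht
  have := le_gronwallBound_of_liminf_deriv_right_le (δ := f a) (ε := 0)
    (fun s hs => (hf s hs).continuousAt.continuousWithinAt)
    (fun s hs _ hr => (hf s (Ico_subset_Icc_self hs)).hasDerivWithinAt.liminf_right_slope_le hr)
    le_rfl (fun s hs => by simpa using bound s (Ico_subset_Icc_self hs)) t ht
  rwa [gronwallBound_ε0, mul_comm] at this

section Deriv

variable {𝕜 : Type*} [NontriviallyNormedField 𝕜] {ι : Type*} [Fintype ι]
  {u v : 𝕜 → ι → 𝕜} {u' v' : ι → 𝕜} {t : 𝕜}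

theorem HasDerivAt.dotProduct (hu : HasDerivAt u u' t) (hv : HasDerivAt v v' t) :
    HasDerivAt (fun s => u s ⬝ᵥ v s) (u' ⬝ᵥ v t + u t ⬝ᵥ v') t := by
  rw [hasDerivAt_pi] at hu hv
  simp only [_root_.dotProduct, ← Finset.sum_add_distrib]
  exact HasDerivAt.fun_sum fun i _ => (hu i).mul (hv i)

theorem HasDerivAt.const_mulVec (M : Matrix ι ι 𝕜) (hu : HasDerivAt u u' t) :
    HasDerivAt (fun s => M *ᵥ u s) (M *ᵥ u') t := by
  rw [hasDerivAt_pi] at hu ⊢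
  intro i
  simp only [mulVec, _root_.dotProduct]
  exact HasDerivAt.fun_sum fun j _ => (hu j).const_mul (M i j)

theorem HasDerivAt.dotProduct_mulVec_self {M : Matrix ι ι 𝕜} (hM : M.IsSymm)
    (hu : HasDerivAt u u' t) :
    HasDerivAt (fun s => u s ⬝ᵥ M *ᵥ u s) (2 * (u t ⬝ᵥ M *ᵥ u')) t := by
  convert hu.dotProduct (hu.const_mulVec M) using 1
  rw [← dotProduct_transpose_mulVec, hM.eq]
  ring

end Deriv

section Algebra

variable {R : Type*} {ι : Type*} [Fintype ι]

theorem mul_eq_self_of_mulVec_eq_zero_iff [Ring R] {P Q : Matrix ι ι R} (hQ : Q * Q = Q)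
    (hker : ∀ w, P *ᵥ w = 0 ↔ Q *ᵥ w = 0) : P * Q = P := by
  refine ext_iff_mulVec.2 fun w => ?_
  have hPw : P *ᵥ (w - Q *ᵥ w) = 0 := by
    rw [hker, mulVec_sub, mulVec_mulVec, hQ, sub_self]
  rw [mulVec_sub, sub_eq_zero] at hPw
  rw [← mulVec_mulVec, hPw]

theorem mul_mul_eq_mul_of_mul_mul_one_sub_eq_zero [Ring R] [DecidableEq ι]
    {P Q A : Matrix ι ι R} (hPQ : P * Q = P) (hinv : Q * A * (1 - Q) = 0) :
    P * A * Q = P * A := by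
  rw [mul_sub, mul_one, sub_eq_zero] at hinv
  calc P * A * Q = P * Q * A * Q := by rw [hPQ]
    _ = P * (Q * A * Q) := by simp only [mul_assoc]
    _ = P * A := by rw [← hinv, ← mul_assoc, hPQ]

theorem dotProduct_add_transpose_mulVec_self [CommRing R] (M : Matrix ι ι R) (y : ι → R) :
    y ⬝ᵥ (M + Mᵀ) *ᵥ y = 2 * (y ⬝ᵥ M *ᵥ y) := by
  rw [add_mulVec, dotProduct_add, dotProduct_transpose_mulVec]
  ring

theorem dotProduct_mulVec_mul_le_of_posSemidef {P Q A : Matrix ι ι ℝ} {b : ℝ}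
    (hP : P.IsSymm) (hQ : Q.IsSymm) (hPA : P * A * Q = P * A)
    (hb : ((2 * b) • P - (P * A * Q + Q * Aᵀ * P)).PosSemidef) (y : ι → ℝ) :
    y ⬝ᵥ P *ᵥ (A *ᵥ y) ≤ b * (y ⬝ᵥ P *ᵥ y) := by
  have hsym : Q * Aᵀ * P = (P * A * Q)ᵀ := by
    rw [transpose_mul, transpose_mul, hP.eq, hQ.eq, mul_assoc]
  have hnonneg := hb.dotProduct_mulVec_nonneg y
  rw [hsym, star_trivial, sub_mulVec, dotProduct_sub, dotProduct_add_transpose_mulVec_self,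
    smul_mulVec, dotProduct_smul, smul_eq_mul, hPA, ← mulVec_mulVec] at hnonneg
  linarith

end Algebra

theorem quadratic_form_gronwall_general
    (n : ℕ) (a c : ℝ)
    (A : ℝ → Matrix (Fin n) (Fin n) ℝ)
    (y : ℝ → Fin n → ℝ)
    (hy : ∀ t ∈ Set.Icc a c, HasDerivAt y ((A t).mulVec (y t)) t)
    (Pv : Matrix (Fin n) (Fin n) ℝ) (hPvsym : Pv.IsSymm) (hPvidem : Pv * Pv = Pv)
    (P : Matrix (Fin n) (Fin n) ℝ) (hP : P.PosSemidef)
    (hker : ∀ w : Fin n → ℝ, P.mulVec w = 0 ↔ Pv.mulVec w = 0)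
    (b : ℝ)
    (hinv : ∀ t ∈ Set.Icc a c, Pv * A t * (1 - Pv) = 0)
    (hb : ∀ t ∈ Set.Icc a c,
      ((2 * b) • P - (P * A t * Pv + Pv * (A t)ᵀ * P)).PosSemidef) :
    ∀ t ∈ Set.Icc a c,
      y t ⬝ᵥ P.mulVec (y t) ≤ Real.exp (2 * b * (t - a)) * (y a ⬝ᵥ P.mulVec (y a)) := by
  have hPsym : P.IsSymm := isHermitian_iff_isSymm.1 hP.isHermitian
  have hPPv : P * Pv = P := mul_eq_self_of_mulVec_eq_zero_iff hPvidem hker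
  refine le_exp_mul_of_hasDerivAt_le_mul (fun t ht => (hy t ht).dotProduct_mulVec_self hPsym)
    fun t ht => ?_
  have hPA := mul_mul_eq_mul_of_mul_mul_one_sub_eq_zero hPPv (hinv t ht)
  have := dotProduct_mulVec_mul_le_of_posSemidef hPsym hPvsym hPA (hb t ht) (y t)
  linarith

/-- Grönwall-type bound for the weighted semi-quadratic form along
a linear time-varying system. `Pv` is the orthogonal projection onto a subspace
`V ⊆ ℝⁿ`, `P` is symmetric PSD with `ker P = V⊥` (i.e. `P w = 0 ↔ Pv w = 0`).
If `Π_V A(t) Π_{V⊥} = 0` and `P A(t) Π_V + Π_V A(t)ᵀ P ⪯ 2 b P` on `[a,c]`,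
then `y(t)ᵀ P y(t) ≤ e^{2b(t−a)} y(a)ᵀ P y(a)` on `[a,c]`. -/
theorem quadratic_form_gronwall
    (n : ℕ) (a c : ℝ) (hac : a < c)
    (A : ℝ → Matrix (Fin n) (Fin n) ℝ) (hAcont : ContinuousOn A (Set.Icc a c))
    (y : ℝ → Fin n → ℝ)
    (hy : ∀ t ∈ Set.Icc a c, HasDerivAt y ((A t).mulVec (y t)) t)
    (Pv : Matrix (Fin n) (Fin n) ℝ) (hPvsym : Pv.IsSymm) (hPvidem : Pv * Pv = Pv)
    (P : Matrix (Fin n) (Fin n) ℝ) (hP : P.PosSemidef)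
    (hker : ∀ w : Fin n → ℝ, P.mulVec w = 0 ↔ Pv.mulVec w = 0)
    (b : ℝ)
    (hinv : ∀ t ∈ Set.Icc a c, Pv * A t * (1 - Pv) = 0)
    (hb : ∀ t ∈ Set.Icc a c,
      ((2 * b) • P - (P * A t * Pv + Pv * (A t)ᵀ * P)).PosSemidef) :
    ∀ t ∈ Set.Icc a c,
      y t ⬝ᵥ P.mulVec (y t) ≤ Real.exp (2 * b * (t - a)) * (y a ⬝ᵥ P.mulVec (y a)) :=
  quadratic_form_gronwall_general n a c A y hy Pv hPvsym hPvidem P hP hker b hinv hb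
end

section
/- (Lemma 5, variational form.) Let M = {1, …, M} be a finite mode set, let each A_q : [t₀, ∞) → ℝ^{n×n} be continuous, and let σ : [t₀, ∞) → M be a switching signal with switching times t₀ < t₁ < t₂ < …, t_k → ∞, σ constant on each [t_k, t_{k+1}). Let y : [t₀, ∞) → ℝⁿ be differentiable with y'(t) = A_{σ(t)}(t) y(t) for all t ≥ t₀. Let V ⊆ ℝⁿ be a subspace with orthogonal projections Π_V, Π_{V⊥}, and suppose Π_V A_q(t) Π_{V⊥} = 0 for all q ∈ M and t ≥ t₀. Let M = S ∪ U be a partition of the modes, and for each q ∈ M let P_q ∈ ℝ^{n×n} be symmetric positive semidefinite with ker(P_q) = V⊥. Assume there are constants β_S > 1, β_U ∈ (0,1), η_S > 0, η_U > 0, 0 < m̲ ≤ m̄ such that: (i) at every switching time t_k (k ≥ 1), writing q⁻ for the mode active on [t_{k−1}, t_k) and q⁺ for the mode active α on [t_k, t_{k+1}), one has P_{q⁺} ⪯ β_S P_{q⁻} if q⁻ ∈ S and P_{q⁺} ⪯ β_U P_{q⁻} if q⁻ ∈ U; (ii) m̲ Π_V ⪯ P_q ⪯ m̄ Π_V for all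 q ∈ M; (iii) for all t ≥ t₀, P_q A_q(t) Π_V + Π_V A_q(t)ᵀ P_q ⪯ −2η_S P_q if q ∈ S, and P_q A_q(t) Π_V + Π_V A_q(t)ᵀ P_q ⪯ 2η_U P_q if q ∈ U. Assume further: for each q ∈ S there exist τ_q > ln(β_S)/(2η_S) and N̲_q ≥ 0 with N_q(a,b) ≤ N̲_q + T_q(a,b)/τ_q for all t₀ ≤ a ≤ b, and for each q ∈ U there exist 0 < τ̄_q < −ln(β_U)/(2η_U) and N̄_q ≥ 0 with N_q(a,b) ≥ N̄_q + T_q(a,b)/τ̄_q for all t₀ ≤ a ≤ b. Then there exist constants k > 0 and λ > 0 such that ‖Π_V y(t)‖₂ ≤ k e^{−λ(t−t₀)} ‖Π_V y(t₀)‖₂ for all t ≥ t₀. -/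
open Matrix MeasureTheory

/-- Number of activations of mode `q` (w.r.t. switching times `ts`, modes `qs`)
whose activation interval `[ts k, ts (k+1))` intersects `[a, b)`. -/
noncomputable def Nact {Q : Type*} (ts : ℕ → ℝ) (qs : ℕ → Q) (q : Q) (a b : ℝ) : ℕ :=
  Set.ncard {k : ℕ | qs k = q ∧ (Set.Ico (ts k) (ts (k + 1)) ∩ Set.Ico a b).Nonempty}

/-- Total activation time of mode `q` within `[a, b)` for the signal `σ`. -/
noncomputable def Tact {Q : Type*} (σ : ℝ → Q) (q : Q) (a b : ℝ) : ℝ :=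
  (volume {s : ℝ | s ∈ Set.Ico a b ∧ σ s = q}).toReal

/-!
Let `W(t) = y(t)ᵀ P_{σ(t)} y(t)`. Since `ker P_q = V⊥` gives `P_q Π_V = P_q` and `V⊥` is
invariant, `P_q A_q = P_q A_q Π_V`; the flow LMI then says `W' ≤ r_q W` between switches
(`r_q = -2η_S` on `S`, `2η_U` on `U`), and a switch out of mode `q` multiplies `W` by at most
`β_q`. Chaining Grönwall over the switching intervals gives
`W(t) ≤ exp (C + ∑_q (log β_q N_q(t₀,t) + r_q T_q(t₀,t))) W(t₀)`, and the MDADT/MDALT bounds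
turn each summand into `C_q - δ_q T_q(t₀,t)` with `δ_q > 0`. As the `T_q(t₀,t)` add up to
`t - t₀`, `W` decays exponentially, and `m̲ ‖Π_V y‖² ≤ W ≤ m̄ ‖Π_V y‖²` transfers this to `Π_V y`.
-/

open Set Real
open scoped Finset

section QuadraticForm

variable {ι : Type*} [Fintype ι]

theorem dotProduct_mulVec_le_of_posSemidef_sub {A B : Matrix ι ι ℝ} (h : (B - A).PosSemidef)
    (x : ι → ℝ) : x ⬝ᵥ A *ᵥ x ≤ x ⬝ᵥ B *ᵥ x := by
  have := h.dotProduct_mulVec_nonneg x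
  rw [star_trivial, sub_mulVec, dotProduct_sub] at this
  linarith

theorem dotProduct_mulVec_eq_of_isSymm_of_idem {Pv : Matrix ι ι ℝ} (hsymm : Pv.IsSymm)
    (hidem : Pv * Pv = Pv) (x : ι → ℝ) : x ⬝ᵥ Pv *ᵥ x = Pv *ᵥ x ⬝ᵥ Pv *ᵥ x := by
  rw [dotProduct_mulVec (Pv *ᵥ x), ← mulVec_transpose, hsymm.eq, mulVec_mulVec, hidem,
    dotProduct_comm]

theorem mul_eq_self_of_ker_le {R : Type*} [Ring R] {P Pv : Matrix ι ι R}
    (hidem : Pv * Pv = Pv) (hker : ∀ w, Pv *ᵥ w = 0 → P *ᵥ w = 0) : P * Pv = P := by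
  refine ext_iff_mulVec.2 fun v => ?_
  have h := hker (v - Pv *ᵥ v) (by rw [mulVec_sub, mulVec_mulVec, hidem, sub_self])
  rw [mulVec_sub, sub_eq_zero] at h
  rw [← mulVec_mulVec, h]

theorem mul_mul_eq_of_invariant {R : Type*} [Ring R] [DecidableEq ι] {P Pv A : Matrix ι ι R}
    (hinv : Pv * A * (1 - Pv) = 0) (hP : P * Pv = P) : P * A * Pv = P * A := by
  rw [mul_sub, mul_one, sub_eq_zero] at hinv
  calc P * A * Pv = P * Pv * A * Pv := by rw [hP]
    _ = P * (Pv * A * Pv) := by simp only [mul_assoc]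
    _ = P * A := by rw [← hinv, ← mul_assoc, hP]

theorem two_mul_dotProduct_le_of_lmi {P Pv A : Matrix ι ι ℝ} {r : ℝ} (hP : P.IsSymm)
    (hPv : Pv.IsSymm) (hPA : P * A * Pv = P * A)
    (hlmi : (r • P - (P * A * Pv + Pv * Aᵀ * P)).PosSemidef) (x : ι → ℝ) :
    2 * (x ⬝ᵥ P *ᵥ (A *ᵥ x)) ≤ r * (x ⬝ᵥ P *ᵥ x) := by
  have hsym : Pv * Aᵀ * P = (P * A)ᵀ := by
    rw [← hPA, transpose_mul, transpose_mul, hP.eq, hPv.eq, mul_assoc]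
  have h := dotProduct_mulVec_le_of_posSemidef_sub hlmi x
  rw [hPA, hsym, add_mulVec, dotProduct_add, dotProduct_transpose_mulVec, smul_mulVec,
    dotProduct_smul, smul_eq_mul, ← mulVec_mulVec] at h
  linarith

end QuadraticForm

section Derivatives

variable {ι : Type*} [Fintype ι] {f g : ℝ → ι → ℝ} {f' g' : ι → ℝ} {t : ℝ}

theorem HasDerivAt.dotProduct_s10 (hf : HasDerivAt f f' t) (hg : HasDerivAt g g' t) :
    HasDerivAt (fun s => f s ⬝ᵥ g s) (f' ⬝ᵥ g t + f t ⬝ᵥ g') t := by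
  rw [hasDerivAt_pi] at hf hg
  exact (HasDerivAt.fun_sum fun i _ => (hf i).fun_mul (hg i)).congr_deriv
    Finset.sum_add_distrib

theorem HasDerivAt.mulVec (M : Matrix ι ι ℝ) (hf : HasDerivAt f f' t) :
    HasDerivAt (fun s => M *ᵥ f s) (M *ᵥ f') t :=
  hasDerivAt_pi.2 fun i => HasDerivAt.fun_sum fun j _ => (hasDerivAt_pi.1 hf j).const_mul (M i j)

theorem HasDerivAt.dotProduct_mulVec_self_s10 {P : Matrix ι ι ℝ} (hP : P.IsSymm)
    (hf : HasDerivAt f f' t) :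
    HasDerivAt (fun s => f s ⬝ᵥ P *ᵥ f s) (2 * (f t ⬝ᵥ P *ᵥ f')) t := by
  convert hf.dotProduct_s10 (hf.mulVec P) using 1
  rw [dotProduct_mulVec, ← mulVec_transpose, hP.eq, dotProduct_comm]
  ring

end Derivatives

theorem le_exp_mul_of_hasDerivWithinAt_le {f f' : ℝ → ℝ} {K a b : ℝ} (hab : a ≤ b)
    (hf : ContinuousOn f (Icc a b)) (hf' : ∀ x ∈ Ico a b, HasDerivWithinAt f (f' x) (Ici x) x)
    (bound : ∀ x ∈ Ico a b, f' x ≤ K * f x) : f b ≤ exp (K * (b - a)) * f a := by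
  have := le_gronwallBound_of_liminf_deriv_right_le hf
    (fun x hx _ hr => (hf' x hx).liminf_right_slope_le hr) le_rfl
    (fun x hx => (bound x hx).trans_eq (add_zero _).symm) b ⟨hab, le_rfl⟩
  rwa [gronwallBound_ε0, mul_comm] at this

theorem dotProduct_mulVec_le_exp_of_lmi {ι : Type*} [Fintype ι] {y : ℝ → ι → ℝ}
    {A : ℝ → Matrix ι ι ℝ} {P Pv : Matrix ι ι ℝ} {r a b : ℝ} (hab : a ≤ b)
    (hy : ∀ s ∈ Icc a b, HasDerivAt y (A s *ᵥ y s) s) (hP : P.IsSymm) (hPv : Pv.IsSymm)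
    (hPA : ∀ s ∈ Ico a b, P * A s * Pv = P * A s)
    (hlmi : ∀ s ∈ Ico a b, (r • P - (P * A s * Pv + Pv * (A s)ᵀ * P)).PosSemidef) :
    y b ⬝ᵥ P *ᵥ y b ≤ exp (r * (b - a)) * (y a ⬝ᵥ P *ᵥ y a) := by
  have hderiv : ∀ s ∈ Icc a b,
      HasDerivAt (fun s => y s ⬝ᵥ P *ᵥ y s) (2 * (y s ⬝ᵥ P *ᵥ (A s *ᵥ y s))) s :=
    fun s hs => (hy s hs).dotProduct_mulVec_self_s10 hP
  exact le_exp_mul_of_hasDerivWithinAt_le hab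
    (fun s hs => (hderiv s hs).continuousAt.continuousWithinAt)
    (fun s hs => (hderiv s (Ico_subset_Icc_self hs)).hasDerivWithinAt)
    fun s hs => two_mul_dotProduct_le_of_lmi hP hPv (hPA s hs) (hlmi s hs) (y s)

section Switching

variable {Q : Type*}

theorem Tact_self (σ : ℝ → Q) (q : Q) (a : ℝ) : Tact σ q a a = 0 := by
  simp [Tact]

theorem Tact_eq_add_of_const [DecidableEq Q] {σ : ℝ → Q} {p : Q} {a b c : ℝ} (hab : a ≤ b)
    (hbc : b ≤ c) (hσ : ∀ s ∈ Ico b c, σ s = p) (q : Q) :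
    Tact σ q a c = Tact σ q a b + if p = q then c - b else 0 := by
  have hsplit : {s | s ∈ Ico a c ∧ σ s = q} =
      {s | s ∈ Ico a b ∧ σ s = q} ∪ {s | s ∈ Ico b c ∧ σ s = q} := by
    ext s
    simp [← Ico_union_Ico_eq_Ico hab hbc, or_and_right]
  have hlast : {s | s ∈ Ico b c ∧ σ s = q} = if p = q then Ico b c else ∅ := by
    ext s
    split_ifs with hpq
    · simp +contextual [hσ, hpq]
    · simpa using fun h1 h2 => (hσ s ⟨h1, h2⟩).trans_ne hpq
  have hfin : volume {s | s ∈ Ico a b ∧ σ s = q} ≠ ⊤ :=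
    (measure_mono fun s hs => hs.1).trans_lt measure_Ico_lt_top |>.ne
  unfold Tact
  rw [hsplit, hlast]
  split_ifs
  · rw [measure_union (disjoint_left.2 fun s hs hs' => not_le.2 hs.1.2 hs'.1) measurableSet_Ico,
      ENNReal.toReal_add hfin measure_Ico_lt_top.ne, Real.volume_Ico,
      ENNReal.toReal_ofReal (sub_nonneg.2 hbc)]
  · simp

theorem sum_mul_Tact_eq_add_of_const [Fintype Q] [DecidableEq Q] {σ : ℝ → Q} {p : Q}
    {a b c : ℝ} (hab : a ≤ b) (hbc : b ≤ c) (hσ : ∀ s ∈ Ico b c, σ s = p) (r : Q → ℝ) :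
    ∑ q, r q * Tact σ q a c = ∑ q, r q * Tact σ q a b + r p * (c - b) := by
  simp only [Tact_eq_add_of_const hab hbc hσ, mul_add, Finset.sum_add_distrib, mul_ite, mul_zero,
    Finset.sum_ite_eq, Finset.mem_univ, if_true]

/-- Outer-measure subadditivity: no measurability of `σ` is needed. -/
theorem sub_le_sum_Tact [Fintype Q] (σ : ℝ → Q) {a b : ℝ} (hab : a ≤ b) :
    b - a ≤ ∑ q, Tact σ q a b := by
  have hcover : Ico a b ⊆ ⋃ q, {s | s ∈ Ico a b ∧ σ s = q} := fun s hs =>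
    mem_iUnion.2 ⟨σ s, hs, rfl⟩
  have hfin : ∀ q, volume {s | s ∈ Ico a b ∧ σ s = q} ≠ ⊤ := fun q =>
    (measure_mono fun s hs => hs.1).trans_lt measure_Ico_lt_top |>.ne
  unfold Tact
  rw [← ENNReal.toReal_sum fun q _ => hfin q, ← ENNReal.toReal_ofReal (sub_nonneg.2 hab),
    ← Real.volume_Ico]
  exact ENNReal.toReal_mono (ENNReal.sum_ne_top.2 fun q _ => hfin q)
    ((measure_mono hcover).trans (measure_iUnion_fintype_le _ _))

theorem exists_mem_Ico_of_tendsto_atTop {ts : ℕ → ℝ}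
    (htop : Filter.Tendsto ts Filter.atTop Filter.atTop) {t : ℝ} (ht : ts 0 ≤ t) :
    ∃ K, t ∈ Ico (ts K) (ts (K + 1)) := by
  classical
  have hex : ∃ m, t < ts m := (htop.eventually_gt_atTop t).exists
  obtain ⟨K, hK⟩ : ∃ K, Nat.find hex = K + 1 :=
    Nat.exists_eq_succ_of_ne_zero fun h0 => (Nat.find_spec hex).not_ge (h0 ▸ ht)
  exact ⟨K, not_lt.1 (Nat.find_min hex (by omega)), hK ▸ Nat.find_spec hex⟩

theorem Nact_eq_card {ts : ℕ → ℝ} (hmono : StrictMono ts) (qs : ℕ → Q) (q : Q) {K : ℕ} {t : ℝ}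
    (ht : t < ts (K + 1)) [DecidablePred fun j => qs j = q ∧ ts j < t] :
    Nact ts qs q (ts 0) t = #{j ∈ Finset.range (K + 1) | qs j = q ∧ ts j < t} := by
  rw [Nact, ← Set.ncard_coe_finset]
  congr 1
  ext j
  simp only [mem_ofPred_eq, Finset.coe_filter, Finset.mem_range, Ico_inter_Ico, nonempty_Ico,
    max_eq_left (hmono.monotone j.zero_le), lt_min_iff, hmono j.lt_succ_self, true_and]
  exact ⟨fun h => ⟨hmono.lt_iff_lt.1 (h.2.trans ht), h⟩, fun h => h.2⟩

theorem Nact_mem_Icc_card [DecidableEq Q] {ts : ℕ → ℝ} (hmono : StrictMono ts) (qs : ℕ → Q)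
    (q : Q) {K : ℕ} {t : ℝ} (ht : t ∈ Ico (ts K) (ts (K + 1))) :
    Nact ts qs q (ts 0) t ∈
      Icc #{j ∈ Finset.range K | qs j = q} (#{j ∈ Finset.range K | qs j = q} + 1) := by
  rw [Nact_eq_card hmono qs q ht.2]
  constructor
  · refine Finset.card_le_card fun j hj => ?_
    simp only [Finset.mem_filter, Finset.mem_range] at hj ⊢
    exact ⟨by omega, hj.2, (hmono hj.1).trans_le ht.1⟩
  · refine (Finset.card_le_card fun j hj => ?_).trans (Finset.card_insert_le K _)
    simp only [Finset.mem_filter, Finset.mem_range, Finset.mem_insert] at hj ⊢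
    rcases Nat.lt_succ_iff_lt_or_eq.1 hj.1 with hjK | rfl
    · exact Or.inr ⟨hjK, hj.2.1⟩
    · exact Or.inl rfl

/-- The `|f q|` absorbs the activation of the current mode, counted by `Nact` but not yet left. -/
theorem sum_range_le_sum_Nact [Fintype Q] [DecidableEq Q] {ts : ℕ → ℝ} (hmono : StrictMono ts)
    (qs : ℕ → Q) (f : Q → ℝ) {K : ℕ} {t : ℝ} (ht : t ∈ Ico (ts K) (ts (K + 1))) :
    ∑ j ∈ Finset.range K, f (qs j) ≤ ∑ q, (|f q| + f q * Nact ts qs q (ts 0) t) := by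
  rw [← Finset.sum_fiberwise (Finset.range K) qs]
  refine Finset.sum_le_sum fun q _ => ?_
  rw [Finset.sum_congr rfl fun j hj => by rw [(Finset.mem_filter.1 hj).2], Finset.sum_const,
    nsmul_eq_mul]
  obtain ⟨hJN, hNJ⟩ := Nact_mem_Icc_card hmono qs q ht
  set J := #{j ∈ Finset.range K | qs j = q}
  set N := Nact ts qs q (ts 0) t
  have hdiff : |(J : ℝ) - N| ≤ 1 := by
    rw [abs_sub_le_iff]
    constructor <;> push_cast [← Nat.cast_le (α := ℝ)] at hJN hNJ <;> linarith
  calc (J : ℝ) * f q = f q * (J - N) + f q * N := by ring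
    _ ≤ |f q| + f q * N := by
      gcongr
      exact (le_abs_self _).trans <| (abs_mul _ _).trans_le <|
        mul_le_of_le_one_right (abs_nonneg _) hdiff

variable [Fintype Q] {ts : ℕ → ℝ} {qs : ℕ → Q} {σ : ℝ → Q} {V : Q → ℝ → ℝ} {β r : Q → ℝ}

theorem le_exp_mul_at_switch (hmono : StrictMono ts)
    (hσ : ∀ k, ∀ s ∈ Ico (ts k) (ts (k + 1)), σ s = qs k) (hβ : ∀ q, 0 < β q)
    (hflow : ∀ k, ∀ t ∈ Icc (ts k) (ts (k + 1)),
      V (qs k) t ≤ exp (r (qs k) * (t - ts k)) * V (qs k) (ts k))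
    (hjump : ∀ k, V (qs (k + 1)) (ts (k + 1)) ≤ β (qs k) * V (qs k) (ts (k + 1))) (K : ℕ) :
    V (qs K) (ts K) ≤ exp (∑ j ∈ Finset.range K, log (β (qs j)) +
      ∑ q, r q * Tact σ q (ts 0) (ts K)) * V (qs 0) (ts 0) := by
  classical
  induction K with
  | zero => simp [Tact_self]
  | succ K ih =>
    have hK : ts K ≤ ts (K + 1) := (hmono K.lt_succ_self).le
    calc V (qs (K + 1)) (ts (K + 1)) ≤ β (qs K) * V (qs K) (ts (K + 1)) := hjump K
      _ ≤ β (qs K) * (exp (r (qs K) * (ts (K + 1) - ts K)) * V (qs K) (ts K)) := by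
        gcongr
        · exact (hβ _).le
        · exact hflow K _ ⟨hK, le_rfl⟩
      _ ≤ β (qs K) * (exp (r (qs K) * (ts (K + 1) - ts K)) * (exp (∑ j ∈ Finset.range K,
          log (β (qs j)) + ∑ q, r q * Tact σ q (ts 0) (ts K)) * V (qs 0) (ts 0))) := by
        gcongr
        exact (hβ _).le
      _ = _ := by
        rw [Finset.sum_range_succ, sum_mul_Tact_eq_add_of_const (hmono.monotone K.zero_le) hK
          (hσ K)]
        simp only [exp_add, exp_log (hβ _)]
        ring

theorem exists_le_exp_sum_of_switched (hmono : StrictMono ts)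
    (htop : Filter.Tendsto ts Filter.atTop Filter.atTop)
    (hσ : ∀ k, ∀ s ∈ Ico (ts k) (ts (k + 1)), σ s = qs k) (hβ : ∀ q, 0 < β q)
    (hflow : ∀ k, ∀ t ∈ Icc (ts k) (ts (k + 1)),
      V (qs k) t ≤ exp (r (qs k) * (t - ts k)) * V (qs k) (ts k))
    (hjump : ∀ k, V (qs (k + 1)) (ts (k + 1)) ≤ β (qs k) * V (qs k) (ts (k + 1)))
    (hV₀ : 0 ≤ V (qs 0) (ts 0)) :
    ∃ C, ∀ t, ts 0 ≤ t → V (σ t) t ≤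
      exp (C + ∑ q, (log (β q) * Nact ts qs q (ts 0) t + r q * Tact σ q (ts 0) t)) *
        V (σ (ts 0)) (ts 0) := by
  classical
  refine ⟨∑ q, |log (β q)|, fun t ht => ?_⟩
  obtain ⟨K, hK⟩ := exists_mem_Ico_of_tendsto_atTop htop ht
  rw [hσ K t hK, hσ 0 (ts 0) ⟨le_rfl, hmono Nat.zero_lt_one⟩]
  have hexp := sum_range_le_sum_Nact hmono qs (fun q => log (β q)) hK
  simp only [Finset.sum_add_distrib] at hexp ⊢
  calc V (qs K) t ≤ exp (r (qs K) * (t - ts K)) * V (qs K) (ts K) := hflow K t ⟨hK.1, hK.2.le⟩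
    _ ≤ exp (r (qs K) * (t - ts K)) * (exp (∑ j ∈ Finset.range K, log (β (qs j)) +
          ∑ q, r q * Tact σ q (ts 0) (ts K)) * V (qs 0) (ts 0)) := by
      gcongr
      exact le_exp_mul_at_switch hmono hσ hβ hflow hjump K
    _ = exp (∑ j ∈ Finset.range K, log (β (qs j)) + ∑ q, r q * Tact σ q (ts 0) t) *
          V (qs 0) (ts 0) := by
      rw [sum_mul_Tact_eq_add_of_const (hmono.monotone K.zero_le) hK.1 fun s hs =>
        hσ K s ⟨hs.1, hs.2.trans hK.2⟩]
      simp only [exp_add]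
      ring
    _ ≤ _ := mul_le_mul_of_nonneg_right (exp_le_exp.2 (by linarith)) hV₀

end Switching

theorem exists_lyapunov_le_exp_sum {ι Q : Type*} [Fintype ι] [DecidableEq ι] [Fintype Q]
    {ts : ℕ → ℝ} (hmono : StrictMono ts) (htop : Filter.Tendsto ts Filter.atTop Filter.atTop)
    {qs : ℕ → Q} {σ : ℝ → Q} (hσ : ∀ k, ∀ s ∈ Ico (ts k) (ts (k + 1)), σ s = qs k)
    {A : Q → ℝ → Matrix ι ι ℝ} {y : ℝ → ι → ℝ}
    (hy : ∀ t, ts 0 ≤ t → HasDerivAt y (A (σ t) t *ᵥ y t) t)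
    {Pv : Matrix ι ι ℝ} (hPv : Pv.IsSymm) (hidem : Pv * Pv = Pv)
    (hinv : ∀ q t, ts 0 ≤ t → Pv * A q t * (1 - Pv) = 0)
    {P : Q → Matrix ι ι ℝ} (hP : ∀ q, (P q).PosSemidef)
    (hker : ∀ q w, Pv *ᵥ w = 0 → P q *ᵥ w = 0) {β r : Q → ℝ} (hβ : ∀ q, 0 < β q)
    (hjump : ∀ k, (β (qs k) • P (qs k) - P (qs (k + 1))).PosSemidef)
    (hlmi : ∀ q t, ts 0 ≤ t →
      (r q • P q - (P q * A q t * Pv + Pv * (A q t)ᵀ * P q)).PosSemidef) :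
    ∃ C, ∀ t, ts 0 ≤ t → y t ⬝ᵥ P (σ t) *ᵥ y t ≤
      exp (C + ∑ q, (log (β q) * Nact ts qs q (ts 0) t + r q * Tact σ q (ts 0) t)) *
        (y (ts 0) ⬝ᵥ P (σ (ts 0)) *ᵥ y (ts 0)) := by
  have hts : ∀ k, ts 0 ≤ ts k := fun k => hmono.monotone k.zero_le
  refine exists_le_exp_sum_of_switched (V := fun q t => y t ⬝ᵥ P q *ᵥ y t) hmono htop hσ hβ
    (fun k t ht => ?_) (fun k => ?_) (by simpa using (hP _).dotProduct_mulVec_nonneg (y (ts 0)))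
  · have hσk : ∀ s ∈ Ico (ts k) t, σ s = qs k := fun s hs => hσ k s ⟨hs.1, hs.2.trans_le ht.2⟩
    refine dotProduct_mulVec_le_exp_of_lmi ht.1 (fun s hs => hy s ((hts k).trans hs.1))
      (isHermitian_iff_isSymm.1 (hP _).isHermitian) hPv (fun s hs => ?_) (fun s hs => ?_)
    · rw [hσk s hs]
      exact mul_mul_eq_of_invariant (hinv _ s ((hts k).trans hs.1))
        (mul_eq_self_of_ker_le hidem (hker _))
    · rw [hσk s hs]
      exact hlmi _ s ((hts k).trans hs.1)
  · simpa [smul_mulVec, dotProduct_smul] using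
      dotProduct_mulVec_le_of_posSemidef_sub (hjump k) (y (ts (k + 1)))

theorem exists_decay_of_MDADT {α : Type*} {s : Set α} {N T : α → ℝ} {β η τ N₀ : ℝ}
    (hβ : 1 < β) (hη : 0 < η) (hτ : log β / (2 * η) < τ) (hN : ∀ x ∈ s, N x ≤ N₀ + T x / τ) :
    ∃ C δ, 0 < δ ∧ ∀ x ∈ s, log β * N x + -(2 * η) * T x ≤ C - δ * T x := by
  have hlog := log_pos hβ
  have hτ₀ : 0 < τ := (div_pos hlog (by positivity)).trans hτ
  refine ⟨log β * N₀, 2 * η - log β / τ, ?_, fun x hx => ?_⟩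
  · rw [sub_pos, div_lt_iff₀ hτ₀]
    rw [div_lt_iff₀ (by positivity)] at hτ
    linarith
  · have := mul_le_mul_of_nonneg_left (hN x hx) hlog.le
    rw [mul_add, mul_div_assoc'] at this
    linarith [show log β * T x / τ = log β / τ * T x by ring]

theorem exists_decay_of_MDALT {α : Type*} {s : Set α} {N T : α → ℝ} {β η τ N₀ : ℝ}
    (hβ₀ : 0 ≤ β) (hβ₁ : β ≤ 1) (hη : 0 < η) (hτ₀ : 0 < τ) (hτ : τ < -log β / (2 * η))
    (hN : ∀ x ∈ s, N₀ + T x / τ ≤ N x) :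
    ∃ C δ, 0 < δ ∧ ∀ x ∈ s, log β * N x + 2 * η * T x ≤ C - δ * T x := by
  have hlog := log_nonpos hβ₀ hβ₁
  refine ⟨log β * N₀, -(2 * η) - log β / τ, ?_, fun x hx => ?_⟩
  · rw [lt_div_iff₀ (by positivity)] at hτ
    rw [sub_pos, div_lt_iff₀ hτ₀]
    linarith
  · have := mul_le_mul_of_nonpos_left (hN x hx) hlog
    rw [mul_add, mul_div_assoc'] at this
    linarith [show log β * T x / τ = log β / τ * T x by ring]

theorem exists_sum_le_sub_mul {Q α : Type*} [Fintype Q] [Nonempty Q] {s : Set α}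
    {E T : Q → α → ℝ} {L : α → ℝ} (hT : ∀ q x, 0 ≤ T q x) (hL : ∀ x ∈ s, L x ≤ ∑ q, T q x)
    (hE : ∀ q, ∃ C δ, 0 < δ ∧ ∀ x ∈ s, E q x ≤ C - δ * T q x) :
    ∃ C δ, 0 < δ ∧ ∀ x ∈ s, ∑ q, E q x ≤ C - δ * L x := by
  choose C δ hδ hE using hE
  set δ₀ := Finset.univ.inf' Finset.univ_nonempty δ
  have hδ₀ : 0 < δ₀ := (Finset.lt_inf'_iff _).2 fun q _ => hδ q
  refine ⟨∑ q, C q, δ₀, hδ₀, fun x hx => ?_⟩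
  calc ∑ q, E q x ≤ ∑ q, (C q - δ₀ * T q x) := Finset.sum_le_sum fun q _ =>
        (hE q x hx).trans (by gcongr; exacts [hT q x, Finset.inf'_le _ (Finset.mem_univ q)])
    _ = ∑ q, C q - δ₀ * ∑ q, T q x := by rw [Finset.sum_sub_distrib, Finset.mul_sum]
    _ ≤ ∑ q, C q - δ₀ * L x := by gcongr; exact hL x hx

theorem exists_sqrt_le_exp_of_lyapunov_le {ι : Type*} [Fintype ι] {Pv : Matrix ι ι ℝ}
    (hPv : Pv.IsSymm) (hidem : Pv * Pv = Pv) {W : ℝ → Matrix ι ι ℝ} {y : ℝ → ι → ℝ}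
    {t₀ mlo mhi C δ : ℝ} (hmlo : 0 < mlo) (hmhi : 0 < mhi) (hδ : 0 < δ)
    (hlo : ∀ t, t₀ ≤ t → (W t - mlo • Pv).PosSemidef) (hhi : (mhi • Pv - W t₀).PosSemidef)
    (hW : ∀ t, t₀ ≤ t →
      y t ⬝ᵥ W t *ᵥ y t ≤ exp (C - δ * (t - t₀)) * (y t₀ ⬝ᵥ W t₀ *ᵥ y t₀)) :
    ∃ k lam : ℝ, 0 < k ∧ 0 < lam ∧ ∀ t, t₀ ≤ t →
      √(Pv *ᵥ y t ⬝ᵥ Pv *ᵥ y t) ≤ k * exp (-lam * (t - t₀)) * √(Pv *ᵥ y t₀ ⬝ᵥ Pv *ᵥ y t₀) := by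
  have hnorm (t : ℝ) := dotProduct_mulVec_eq_of_isSymm_of_idem hPv hidem (y t)
  have hlo' (t : ℝ) (ht : t₀ ≤ t) : mlo * (Pv *ᵥ y t ⬝ᵥ Pv *ᵥ y t) ≤ y t ⬝ᵥ W t *ᵥ y t := by
    simpa [smul_mulVec, dotProduct_smul, hnorm] using
      dotProduct_mulVec_le_of_posSemidef_sub (hlo t ht) (y t)
  have hhi' : y t₀ ⬝ᵥ W t₀ *ᵥ y t₀ ≤ mhi * (Pv *ᵥ y t₀ ⬝ᵥ Pv *ᵥ y t₀) := by
    simpa [smul_mulVec, dotProduct_smul, hnorm] using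
      dotProduct_mulVec_le_of_posSemidef_sub hhi (y t₀)
  have hu₀ : 0 ≤ Pv *ᵥ y t₀ ⬝ᵥ Pv *ᵥ y t₀ := by
    simpa using dotProduct_self_star_nonneg (Pv *ᵥ y t₀)
  refine ⟨√(mhi / mlo * exp C), δ / 2, by positivity, by positivity, fun t ht => ?_⟩
  have hdecay : mlo * (Pv *ᵥ y t ⬝ᵥ Pv *ᵥ y t) ≤
      exp (C - δ * (t - t₀)) * (mhi * (Pv *ᵥ y t₀ ⬝ᵥ Pv *ᵥ y t₀)) :=
    (hlo' t ht).trans <| (hW t ht).trans <| by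
      gcongr
  calc √(Pv *ᵥ y t ⬝ᵥ Pv *ᵥ y t)
      ≤ √(mhi / mlo * exp (C - δ * (t - t₀)) * (Pv *ᵥ y t₀ ⬝ᵥ Pv *ᵥ y t₀)) := by
        refine sqrt_le_sqrt ?_
        rw [show mhi / mlo * exp (C - δ * (t - t₀)) * (Pv *ᵥ y t₀ ⬝ᵥ Pv *ᵥ y t₀) =
          exp (C - δ * (t - t₀)) * (mhi * (Pv *ᵥ y t₀ ⬝ᵥ Pv *ᵥ y t₀)) / mlo by ring,
          le_div_iff₀ hmlo]
        linarith
    _ = _ := by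
      rw [sub_eq_add_neg, exp_add, ← mul_assoc, sqrt_mul' _ hu₀,
        sqrt_mul' _ (exp_pos _).le, ← exp_half]
      ring_nf

theorem semi_contraction_in_subspace_general
    (n : ℕ) (Q : Type*) [Fintype Q]
    (t0 : ℝ) (A : Q → ℝ → Matrix (Fin n) (Fin n) ℝ)
    (ts : ℕ → ℝ) (hts0 : ts 0 = t0) (hmono : StrictMono ts)
    (htop : Filter.Tendsto ts Filter.atTop Filter.atTop)
    (qs : ℕ → Q) (σ : ℝ → Q)
    (hσ : ∀ k, ∀ s ∈ Set.Ico (ts k) (ts (k + 1)), σ s = qs k)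
    (y : ℝ → Fin n → ℝ)
    (hy : ∀ t, t0 ≤ t → HasDerivAt y ((A (σ t) t).mulVec (y t)) t)
    (Pv : Matrix (Fin n) (Fin n) ℝ) (hPvsym : Pv.IsSymm) (hPvidem : Pv * Pv = Pv)
    (hinv : ∀ q, ∀ t, t0 ≤ t → Pv * A q t * (1 - Pv) = 0)
    (S : Set Q)
    (P : Q → Matrix (Fin n) (Fin n) ℝ)
    (hPpsd : ∀ q, (P q).PosSemidef)
    (hPker : ∀ q, ∀ w : Fin n → ℝ, (P q).mulVec w = 0 ↔ Pv.mulVec w = 0)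
    (βS βU ηS ηU mlo mhi : ℝ)
    (hβS : 1 < βS) (hβU0 : 0 < βU) (hβU1 : βU < 1)
    (hηS : 0 < ηS) (hηU : 0 < ηU) (hmlo : 0 < mlo) (hm : mlo ≤ mhi)
    (hswitchS : ∀ k : ℕ, qs k ∈ S → (βS • P (qs k) - P (qs (k + 1))).PosSemidef)
    (hswitchU : ∀ k : ℕ, qs k ∉ S → (βU • P (qs k) - P (qs (k + 1))).PosSemidef)
    (hPlo : ∀ q, (P q - mlo • Pv).PosSemidef)
    (hPhi : ∀ q, (mhi • Pv - P q).PosSemidef)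
    (hLMIS : ∀ q ∈ S, ∀ t, t0 ≤ t →
      ((-(2 * ηS)) • P q - (P q * A q t * Pv + Pv * (A q t)ᵀ * P q)).PosSemidef)
    (hLMIU : ∀ q ∉ S, ∀ t, t0 ≤ t →
      ((2 * ηU) • P q - (P q * A q t * Pv + Pv * (A q t)ᵀ * P q)).PosSemidef)
    (hdwellS : ∀ q ∈ S, ∃ τ Nlo : ℝ, Real.log βS / (2 * ηS) < τ ∧ 0 ≤ Nlo ∧
      ∀ a b : ℝ, t0 ≤ a → a ≤ b →
        (Nact ts qs q a b : ℝ) ≤ Nlo + Tact σ q a b / τ)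
    (hdwellU : ∀ q ∉ S, ∃ τ Nhi : ℝ, 0 < τ ∧ τ < -Real.log βU / (2 * ηU) ∧ 0 ≤ Nhi ∧
      ∀ a b : ℝ, t0 ≤ a → a ≤ b →
        Nhi + Tact σ q a b / τ ≤ (Nact ts qs q a b : ℝ)) :
    ∃ k lam : ℝ, 0 < k ∧ 0 < lam ∧ ∀ t, t0 ≤ t →
      Real.sqrt (Pv.mulVec (y t) ⬝ᵥ Pv.mulVec (y t))
        ≤ k * Real.exp (-lam * (t - t0)) *
          Real.sqrt (Pv.mulVec (y t0) ⬝ᵥ Pv.mulVec (y t0)) := by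
  subst hts0
  classical
  have : Nonempty Q := ⟨σ (ts 0)⟩
  set β : Q → ℝ := fun q => if q ∈ S then βS else βU
  set r : Q → ℝ := fun q => if q ∈ S then -(2 * ηS) else 2 * ηU
  obtain ⟨C₀, hV⟩ := exists_lyapunov_le_exp_sum hmono htop hσ hy hPvsym hPvidem hinv hPpsd
    (fun q w => (hPker q w).2) (β := β) (r := r)
    (fun q => by dsimp only [β]; split_ifs <;> linarith)
    (fun k => by dsimp only [β]; split_ifs with hq; exacts [hswitchS k hq, hswitchU k hq])
    fun q t ht => by dsimp only [r]; split_ifs with hq; exacts [hLMIS q hq t ht, hLMIU q hq t ht]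
  obtain ⟨C, δ, hδ, hdecay⟩ := exists_sum_le_sub_mul (s := Ici (ts 0)) (L := fun t => t - ts 0)
    (E := fun q t => log (β q) * Nact ts qs q (ts 0) t + r q * Tact σ q (ts 0) t)
    (fun q t => ENNReal.toReal_nonneg) (fun t ht => sub_le_sum_Tact σ ht) fun q => by
      dsimp only [β, r]
      split_ifs with hq
      · obtain ⟨τ, N₀, hτ, -, hN⟩ := hdwellS q hq
        exact exists_decay_of_MDADT hβS hηS hτ fun t ht => hN (ts 0) t le_rfl ht
      · obtain ⟨τ, N₀, hτ₀, hτ, -, hN⟩ := hdwellU q hq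
        exact exists_decay_of_MDALT hβU0.le hβU1.le hηU hτ₀ hτ fun t ht => hN (ts 0) t le_rfl ht
  refine exists_sqrt_le_exp_of_lyapunov_le hPvsym hPvidem hmlo (hmlo.trans_le hm) hδ
    (fun t _ => hPlo (σ t)) (hPhi _) (C := C₀ + C) fun t ht => (hV t ht).trans ?_
  gcongr
  · simpa using (hPpsd _).dotProduct_mulVec_nonneg (y (ts 0))
  · linarith [hdecay t ht]

/-- Lemma 5, variational form: semi-contraction of a switched
variational system within the subspace `V = ran Pv`, where `Pv` is the
orthogonal projection onto `V` (symmetric idempotent), each mode's matrix `P q`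
is symmetric PSD with `ker (P q) = V⊥` (i.e. `P q w = 0 ↔ Pv w = 0`), `V⊥` is
invariant for every mode (`Pv A_q(t) (1 - Pv) = 0`), the jump, sandwich and flow
LMIs hold with constants `βS > 1`, `βU ∈ (0,1)`, `ηS, ηU > 0`, `0 < m̲ ≤ m̄`, and
the MDADT/MDALT conditions hold. Then `‖Pv y(t)‖₂ ≤ k e^{−λ(t−t₀)} ‖Pv y(t₀)‖₂`. -/
theorem semi_contraction_in_subspace
    (n : ℕ) (Q : Type*) [Fintype Q]
    (t0 : ℝ) (A : Q → ℝ → Matrix (Fin n) (Fin n) ℝ)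
    (hAcont : ∀ q, ContinuousOn (A q) (Set.Ici t0))
    (ts : ℕ → ℝ) (hts0 : ts 0 = t0) (hmono : StrictMono ts)
    (htop : Filter.Tendsto ts Filter.atTop Filter.atTop)
    (qs : ℕ → Q) (σ : ℝ → Q)
    (hσ : ∀ k, ∀ s ∈ Set.Ico (ts k) (ts (k + 1)), σ s = qs k)
    (y : ℝ → Fin n → ℝ)
    (hy : ∀ t, t0 ≤ t → HasDerivAt y ((A (σ t) t).mulVec (y t)) t)
    (Pv : Matrix (Fin n) (Fin n) ℝ) (hPvsym : Pv.IsSymm) (hPvidem : Pv * Pv = Pv)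
    (hinv : ∀ q, ∀ t, t0 ≤ t → Pv * A q t * (1 - Pv) = 0)
    (S : Set Q)
    (P : Q → Matrix (Fin n) (Fin n) ℝ)
    (hPpsd : ∀ q, (P q).PosSemidef)
    (hPker : ∀ q, ∀ w : Fin n → ℝ, (P q).mulVec w = 0 ↔ Pv.mulVec w = 0)
    (βS βU ηS ηU mlo mhi : ℝ)
    (hβS : 1 < βS) (hβU0 : 0 < βU) (hβU1 : βU < 1)
    (hηS : 0 < ηS) (hηU : 0 < ηU) (hmlo : 0 < mlo) (hm : mlo ≤ mhi)
    (hswitchS : ∀ k : ℕ, qs k ∈ S → (βS • P (qs k) - P (qs (k + 1))).PosSemidef)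
    (hswitchU : ∀ k : ℕ, qs k ∉ S → (βU • P (qs k) - P (qs (k + 1))).PosSemidef)
    (hPlo : ∀ q, (P q - mlo • Pv).PosSemidef)
    (hPhi : ∀ q, (mhi • Pv - P q).PosSemidef)
    (hLMIS : ∀ q ∈ S, ∀ t, t0 ≤ t →
      ((-(2 * ηS)) • P q - (P q * A q t * Pv + Pv * (A q t)ᵀ * P q)).PosSemidef)
    (hLMIU : ∀ q ∉ S, ∀ t, t0 ≤ t →
      ((2 * ηU) • P q - (P q * A q t * Pv + Pv * (A q t)ᵀ * P q)).PosSemidef)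
    (hdwellS : ∀ q ∈ S, ∃ τ Nlo : ℝ, Real.log βS / (2 * ηS) < τ ∧ 0 ≤ Nlo ∧
      ∀ a b : ℝ, t0 ≤ a → a ≤ b →
        (Nact ts qs q a b : ℝ) ≤ Nlo + Tact σ q a b / τ)
    (hdwellU : ∀ q ∉ S, ∃ τ Nhi : ℝ, 0 < τ ∧ τ < -Real.log βU / (2 * ηU) ∧ 0 ≤ Nhi ∧
      ∀ a b : ℝ, t0 ≤ a → a ≤ b →
        Nhi + Tact σ q a b / τ ≤ (Nact ts qs q a b : ℝ)) :
    ∃ k lam : ℝ, 0 < k ∧ 0 < lam ∧ ∀ t, t0 ≤ t →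
      Real.sqrt (Pv.mulVec (y t) ⬝ᵥ Pv.mulVec (y t))
        ≤ k * Real.exp (-lam * (t - t0)) *
          Real.sqrt (Pv.mulVec (y t0) ⬝ᵥ Pv.mulVec (y t0)) :=
  semi_contraction_in_subspace_general n Q t0 A ts hts0 hmono htop qs σ hσ y hy Pv hPvsym hPvidem
    hinv S P hPpsd hPker βS βU ηS ηU mlo mhi hβS hβU0 hβU1 hηS hηU hmlo hm hswitchS hswitchU hPlo
    hPhi hLMIS hLMIU hdwellS hdwellU
end

section
/- Let Π₁, …, Π_I ∈ ℝ^{n×n} be orthogonal projections with ⋂_{i=1}^{I} ker(Πᵢ) = {0}. Let t₀ ∈ ℝ, let y : [t₀, ∞) → ℝⁿ, and suppose there exist constants kᵢ > 0 and λᵢ > 0 such that ‖Πᵢ y(t)‖₂ ≤ kᵢ e^{−λᵢ(t−t₀)} ‖Πᵢ y(t₀)‖₂ for every i ∈ {1,…,I} and every t ≥ t₀. Then, with λ* := min_{i} λᵢ, there exists a constant k* > 0 such that ‖y(t)‖₂ ≤ k* e^{−λ*(t−t₀)} ‖y(t₀)‖₂ for all t ≥ t₀. -/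
/-! The map `x ↦ (Πᵢ x)ᵢ` is injective on a finite-dimensional space, hence anti-Lipschitz:
`‖x‖ ≤ K · maxᵢ ‖Πᵢ x‖`. Since an orthogonal projection is a contraction,
`‖Πᵢ y(t)‖ ≤ (maxᵢ kᵢ) e^{-λ*(t-t₀)} ‖y(t₀)‖` for every `i`, so `k* = K · maxᵢ kᵢ` works. -/

open Matrix

section

variable {n : Type*} [Fintype n]

theorem Matrix.sqrt_dotProduct_self_eq_norm_toLp (x : n → ℝ) :
    √(x ⬝ᵥ x) = ‖WithLp.toLp 2 x‖ := by
  rw [EuclideanSpace.norm_eq]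
  simp [dotProduct, sq]

theorem Matrix.norm_toLp_mulVec_le_of_isSymm_of_mul_self {P : Matrix n n ℝ} (hsym : P.IsSymm)
    (hidem : P * P = P) (x : n → ℝ) :
    ‖WithLp.toLp 2 (P *ᵥ x)‖ ≤ ‖WithLp.toLp 2 x‖ := by
  classical
  have hP : IsStarProjection (toEuclideanCLM (n := n) (𝕜 := ℝ) P) :=
    ⟨by rw [IsIdempotentElem, ← map_mul, hidem], by
      rw [IsSelfAdjoint, ← map_star, star_eq_conjTranspose, conjTranspose_eq_transpose_of_trivial,
        hsym.eq]⟩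
  rw [← toEuclideanCLM_toLp]
  exact (ContinuousLinearMap.le_opNorm _ _).trans
    (mul_le_of_le_one_left (norm_nonneg _) hP.norm_le)

end

theorem LinearMap.exists_pos_norm_le_mul_of_separating {𝕜 E F ι : Type*}
    [NontriviallyNormedField 𝕜] [CompleteSpace 𝕜]
    [NormedAddCommGroup E] [NormedSpace 𝕜 E] [FiniteDimensional 𝕜 E]
    [NormedAddCommGroup F] [NormedSpace 𝕜 F] [Fintype ι]
    (f : ι → E →ₗ[𝕜] F) (hf : ∀ x, (∀ i, f i x = 0) → x = 0) :
    ∃ K > 0, ∀ x M, 0 ≤ M → (∀ i, ‖f i x‖ ≤ M) → ‖x‖ ≤ K * M := by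
  have hker : ker (pi f) = ⊥ :=
    ker_eq_bot'.mpr fun x hx => hf x fun i => congrFun hx i
  obtain ⟨K, hK, hanti⟩ := (pi f).exists_antilipschitzWith hker
  refine ⟨K, hK, fun x M hM hfM => ?_⟩
  calc ‖x‖ ≤ K * ‖pi f x‖ := by simpa using hanti.le_mul_dist x 0
    _ ≤ K * M := by gcongr; exact (pi_norm_le_iff_of_nonneg hM).mpr hfM

theorem separating_family_exponential_decay_general
    (n I : ℕ) (hI : 0 < I)
    (Pv : Fin I → Matrix (Fin n) (Fin n) ℝ)
    (hsym : ∀ i, (Pv i).IsSymm) (hidem : ∀ i, Pv i * Pv i = Pv i)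
    (hsep : ∀ x : Fin n → ℝ, (∀ i, (Pv i).mulVec x = 0) → x = 0)
    (t0 : ℝ) (y : ℝ → Fin n → ℝ) (k lam : Fin I → ℝ)
    (hk : ∀ i, 0 < k i)
    (hdecay : ∀ i, ∀ t, t0 ≤ t →
      Real.sqrt ((Pv i).mulVec (y t) ⬝ᵥ (Pv i).mulVec (y t))
        ≤ k i * Real.exp (-lam i * (t - t0)) *
          Real.sqrt ((Pv i).mulVec (y t0) ⬝ᵥ (Pv i).mulVec (y t0))) :
    ∃ kstar : ℝ, 0 < kstar ∧ ∀ t, t0 ≤ t →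
      Real.sqrt (y t ⬝ᵥ y t)
        ≤ kstar * Real.exp (-(Finset.univ.inf'
              (Finset.univ_nonempty_iff.mpr (Fin.pos_iff_nonempty.mp hI)) lam)
            * (t - t0)) * Real.sqrt (y t0 ⬝ᵥ y t0) := by
  set hne := Finset.univ_nonempty_iff.mpr (Fin.pos_iff_nonempty.mp hI)
  set lamStar := Finset.univ.inf' hne lam
  set kMax := Finset.univ.sup' hne k
  have hkMax : 0 < kMax := (hk ⟨0, hI⟩).trans_le (Finset.le_sup' k (Finset.mem_univ _))
  obtain ⟨K, hK, hcoercive⟩ := LinearMap.exists_pos_norm_le_mul_of_separating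
    (fun i => toLpLin 2 2 (Pv i)) fun x hx => by
      have hx0 := hsep x.ofLp fun i => by simpa [toLpLin_apply] using hx i
      simpa using congrArg (WithLp.toLp 2) hx0
  refine ⟨K * kMax, mul_pos hK hkMax, fun t ht => ?_⟩
  simp only [sqrt_dotProduct_self_eq_norm_toLp] at hdecay ⊢
  have hcomponent : ∀ i, ‖toLpLin 2 2 (Pv i) (WithLp.toLp 2 (y t))‖
      ≤ kMax * Real.exp (-lamStar * (t - t0)) * ‖WithLp.toLp 2 (y t0)‖ := fun i => by
    have hki : k i ≤ kMax := Finset.le_sup' k (Finset.mem_univ i)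
    have hlami : lamStar ≤ lam i := Finset.inf'_le lam (Finset.mem_univ i)
    have hproj := norm_toLp_mulVec_le_of_isSymm_of_mul_self (hsym i) (hidem i) (y t0)
    have hdt : 0 ≤ t - t0 := sub_nonneg.mpr ht
    rw [toLpLin_toLp, toLin'_apply]
    refine (hdecay i t ht).trans ?_
    gcongr
  calc ‖WithLp.toLp 2 (y t)‖
      ≤ K * (kMax * Real.exp (-lamStar * (t - t0)) * ‖WithLp.toLp 2 (y t0)‖) :=
        hcoercive _ _ (by positivity) hcomponent
    _ = K * kMax * Real.exp (-lamStar * (t - t0)) * ‖WithLp.toLp 2 (y t0)‖ := by ring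

/-- If `Π 1, …, Π I` are orthogonal projections with
`⋂ ker Π i = {0}` (separating family) and `‖Π i y(t)‖₂` decays exponentially
with rate `λ i` for every `i`, then `‖y(t)‖₂` decays exponentially with rate
`λ* = min_i λ i`. -/
theorem separating_family_exponential_decay
    (n I : ℕ) (hI : 0 < I)
    (Pv : Fin I → Matrix (Fin n) (Fin n) ℝ)
    (hsym : ∀ i, (Pv i).IsSymm) (hidem : ∀ i, Pv i * Pv i = Pv i)
    (hsep : ∀ x : Fin n → ℝ, (∀ i, (Pv i).mulVec x = 0) → x = 0)
    (t0 : ℝ) (y : ℝ → Fin n → ℝ) (k lam : Fin I → ℝ)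
    (hk : ∀ i, 0 < k i) (hlam : ∀ i, 0 < lam i)
    (hdecay : ∀ i, ∀ t, t0 ≤ t →
      Real.sqrt ((Pv i).mulVec (y t) ⬝ᵥ (Pv i).mulVec (y t))
        ≤ k i * Real.exp (-lam i * (t - t0)) *
          Real.sqrt ((Pv i).mulVec (y t0) ⬝ᵥ (Pv i).mulVec (y t0))) :
    ∃ kstar : ℝ, 0 < kstar ∧ ∀ t, t0 ≤ t →
      Real.sqrt (y t ⬝ᵥ y t)
        ≤ kstar * Real.exp (-(Finset.univ.inf'
              (Finset.univ_nonempty_iff.mpr (Fin.pos_iff_nonempty.mp hI)) lam)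
            * (t - t0)) * Real.sqrt (y t0 ⬝ᵥ y t0) :=
  separating_family_exponential_decay_general n I hI Pv hsym hidem hsep t0 y k lam hk hdecay
end

section
/- Let V ⊆ ℝⁿ be an h-dimensional subspace, V ∈ ℝ^{n×h} a matrix whose columns form an orthonormal basis of V, U ∈ ℝ^{n×(n−h)} a matrix whose columns form an orthonormal basis of V⊥, T = [V | U], and Π_V = V Vᵀ the orthogonal projection onto V. Let P ∈ ℝ^{n×n} be symmetric positive semidefinite with ker(P) = V⊥, let A ∈ ℝ^{n×n}, and set P̃ = Vᵀ P V ∈ ℝ^{h×h} and Ã₁₁ = Vᵀ A V ∈ ℝ^{h×h}. Then for every b ∈ ℝ: P A Π_V + Π_V Aᵀ P ⪯ 2b P holds if and only if P̃ Ã₁₁ + Ã₁₁ᵀ P̃ ⪯ 2b P̃ holds. -/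
/-!
Since `ker Vᵀ ⊆ ker P` and `VᵀV = 1`, the projection `Π = VVᵀ` satisfies `PΠ = P`, hence also
`ΠP = P` by symmetry, so `P = V P̃ Vᵀ`. Substituting this turns the large LMI matrix into the
congruence `V (2bP̃ - (P̃Ã₁₁ + Ã₁₁ᵀP̃)) Vᵀ`, and congruence by an isometry `V` both preserves and
reflects positive semidefiniteness (compress back with `Vᵀ · V`).
-/

open Matrix

namespace Matrix

variable {m k R : Type*} [Fintype m] [Fintype k]

section Ring

variable [Ring R] [StarRing R]

theorem mul_mul_conjTranspose_eq_self_of_ker_le [DecidableEq k] {P : Matrix m m R}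
    {V : Matrix m k R} (hV : Vᴴ * V = 1) (hker : ∀ w, Vᴴ *ᵥ w = 0 → P *ᵥ w = 0) :
    P * (V * Vᴴ) = P := by
  classical
  have hcompl : ∀ w, Vᴴ *ᵥ (w - V *ᵥ (Vᴴ *ᵥ w)) = 0 := fun w => by
    rw [mulVec_sub, mulVec_mulVec, hV, one_mulVec, sub_self]
  refine ext_of_mulVec_single fun i => ?_
  have := hker _ (hcompl (Pi.single i 1))
  rwa [mulVec_sub, sub_eq_zero, eq_comm, mulVec_mulVec, mulVec_mulVec, Matrix.mul_assoc] at this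

theorem mul_conjTranspose_mul_eq_self_of_isHermitian {P : Matrix m m R} {V : Matrix m k R}
    (hP : P.IsHermitian) (h : P * (V * Vᴴ) = P) : V * Vᴴ * P = P := by
  simpa only [conjTranspose_mul, conjTranspose_conjTranspose, hP.eq, Matrix.mul_assoc]
    using congrArg conjTranspose h

theorem posSemidef_mul_mul_conjTranspose_iff [DecidableEq k] [PartialOrder R] {V : Matrix m k R}
    (hV : Vᴴ * V = 1) {M : Matrix k k R} : (V * M * Vᴴ).PosSemidef ↔ M.PosSemidef := by
  refine ⟨fun h => ?_, fun h => h.mul_mul_conjTranspose_same V⟩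
  have hcompress : Vᴴ * (V * M * Vᴴ) * V = M := by
    simp only [← Matrix.mul_assoc, hV, Matrix.one_mul]
    rw [Matrix.mul_assoc, hV, Matrix.mul_one]
  simpa only [hcompress] using h.conjTranspose_mul_mul_same V

end Ring

theorem smul_sub_lyapunov_eq_mul_mul_conjTranspose [CommRing R] [StarRing R]
    {P : Matrix m m R} {V : Matrix m k R} (hright : P * (V * Vᴴ) = P)
    (hleft : V * Vᴴ * P = P) (c : R) (A : Matrix m m R) :
    c • P - (P * A * (V * Vᴴ) + V * Vᴴ * Aᴴ * P) =
      V * (c • (Vᴴ * P * V) - ((Vᴴ * P * V) * (Vᴴ * A * V) + (Vᴴ * A * V)ᴴ * (Vᴴ * P * V)))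
        * Vᴴ := by
  have hfactor : V * (Vᴴ * P * V) * Vᴴ = P := by
    calc V * (Vᴴ * P * V) * Vᴴ = V * Vᴴ * P * (V * Vᴴ) := by simp only [Matrix.mul_assoc]
      _ = P := by rw [hleft, hright]
  conv_lhs => rw [← hfactor]
  simp only [conjTranspose_mul, conjTranspose_conjTranspose, Matrix.mul_sub, Matrix.sub_mul,
    Matrix.mul_add, Matrix.add_mul, Matrix.mul_smul, Matrix.smul_mul, Matrix.mul_assoc]

end Matrix

theorem lmi_reduction_to_subspace_coordinates_general
    (n h : ℕ)
    (Vb : Matrix (Fin n) (Fin h) ℝ)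
    (hV : Vbᵀ * Vb = 1)
    (P : Matrix (Fin n) (Fin n) ℝ) (hP : P.PosSemidef)
    (hker : ∀ w : Fin n → ℝ, P.mulVec w = 0 ↔ Vbᵀ.mulVec w = 0)
    (A : Matrix (Fin n) (Fin n) ℝ) :
    ∀ b : ℝ,
      ((2 * b) • P - (P * A * (Vb * Vbᵀ) + (Vb * Vbᵀ) * Aᵀ * P)).PosSemidef ↔
      ((2 * b) • (Vbᵀ * P * Vb)
        - ((Vbᵀ * P * Vb) * (Vbᵀ * A * Vb)
            + (Vbᵀ * A * Vb)ᵀ * (Vbᵀ * P * Vb))).PosSemidef := by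
  simp only [← conjTranspose_eq_transpose_of_trivial] at hV hker ⊢
  intro b
  have hright : P * (Vb * Vbᴴ) = P :=
    mul_mul_conjTranspose_eq_self_of_ker_le hV fun w => (hker w).2
  have hleft : Vb * Vbᴴ * P = P :=
    mul_conjTranspose_mul_eq_self_of_isHermitian hP.isHermitian hright
  rw [smul_sub_lyapunov_eq_mul_mul_conjTranspose hright hleft,
    posSemidef_mul_mul_conjTranspose_iff hV]

/-- With `Vb`, `Ub` orthonormal bases of `V` and `V⊥`
(`Vbᵀ Vb = I`, `Ubᵀ Ub = I`, `Vbᵀ Ub = 0`, `Vb Vbᵀ + Ub Ubᵀ = I`; a vector lies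
in `V⊥` iff `Vbᵀ w = 0`), `Π_V = Vb Vbᵀ`, `P` symmetric PSD with `ker P = V⊥`,
`P̃ = Vbᵀ P Vb` and `Ã₁₁ = Vbᵀ A Vb`: for every `b`, the LMI
`P A Π_V + Π_V Aᵀ P ⪯ 2b P` holds iff `P̃ Ã₁₁ + Ã₁₁ᵀ P̃ ⪯ 2b P̃`. -/
theorem lmi_reduction_to_subspace_coordinates
    (n h : ℕ) (hh : h ≤ n)
    (Vb : Matrix (Fin n) (Fin h) ℝ) (Ub : Matrix (Fin n) (Fin (n - h)) ℝ)
    (hV : Vbᵀ * Vb = 1) (hU : Ubᵀ * Ub = 1) (hVU : Vbᵀ * Ub = 0)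
    (hcomplete : Vb * Vbᵀ + Ub * Ubᵀ = 1)
    (P : Matrix (Fin n) (Fin n) ℝ) (hP : P.PosSemidef)
    (hker : ∀ w : Fin n → ℝ, P.mulVec w = 0 ↔ Vbᵀ.mulVec w = 0)
    (A : Matrix (Fin n) (Fin n) ℝ) :
    ∀ b : ℝ,
      ((2 * b) • P - (P * A * (Vb * Vbᵀ) + (Vb * Vbᵀ) * Aᵀ * P)).PosSemidef ↔
      ((2 * b) • (Vbᵀ * P * Vb)
        - ((Vbᵀ * P * Vb) * (Vbᵀ * A * Vb)
            + (Vbᵀ * A * Vb)ᵀ * (Vbᵀ * P * Vb))).PosSemidef :=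
  lmi_reduction_to_subspace_coordinates_general n h Vb hV P hP hker A
end
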